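/- arXiv:math/0305293 — 2 statements merged into one kernel-verified Lean document; each statement's English description precedes it below -/
import Mathlib

section
/- Let $a_1,\dots,a_m$ be elements of a field $F$ and $s_1,\dots,s_m$ positive integers with $s_1+\cdots+s_m=s$. Define a sequence of $s$ functions $f_1,\dots,f_s:\mathbb{Z}\to F$ by listing, for each $j=1,\dots,m$ in order, the functions $n\mapsto n^t a_j^n$ for $t=0,1,\dots,s_j-1$. Let $V$ be the $s\times s$ matrix with entries $V_{pk}=f_k(p-1)$ for $p,k=1,\dots,s$. Then $\det(V)=\prod_{j=1}^m (s_j-1)!!\, a_j^{s_j(s_j-1)/2}\,\prod_{1\le i<j\le m}(a_j-a_i)^{s_i s_j}$, where $m!!=m!\cdot(m-1)!\cdots 2!\cdot 1!$ (the superfactorial) and $0!!=1$. -/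
namespace ExtVdm

open Polynomial Finset

variable {F : Type*} [Field F]

/-- The operator `θ = X * d/dX` on polynomials. -/
noncomputable def theta (r : F[X]) : F[X] := X * derivative r

lemma theta_coeff (r : F[X]) (n : ℕ) : (theta r).coeff n = (n : F) * r.coeff n := by
  cases n with
  | zero => simp [theta, Polynomial.mul_coeff_zero]
  | succ k =>
      rw [theta, Polynomial.coeff_X_mul, Polynomial.coeff_derivative]
      push_cast
      ring

lemma theta_natDegree_le (r : F[X]) : (theta r).natDegree ≤ r.natDegree := by
  by_cases h : r.natDegree = 0
  · obtain ⟨c, rfl⟩ := Polynomial.natDegree_eq_zero.mp h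
    simp [theta]
  · calc (theta r).natDegree ≤ (X : F[X]).natDegree + (derivative r).natDegree :=
          Polynomial.natDegree_mul_le
    _ ≤ 1 + (r.natDegree - 1) := by
        gcongr
        · exact Polynomial.natDegree_X_le
        · exact Polynomial.natDegree_derivative_le r
    _ ≤ r.natDegree := by omega

lemma theta_iter_natDegree_le (u : ℕ) (r : F[X]) :
    ((theta (F := F))^[u] r).natDegree ≤ r.natDegree := by
  induction u generalizing r with
  | zero => simp
  | succ v ih =>
      rw [Function.iterate_succ_apply']
      exact (theta_natDegree_le _).trans (ih r)

lemma theta_iter_coeff (u : ℕ) (r : F[X]) (n : ℕ) :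
    ((theta (F := F))^[u] r).coeff n = (n : F) ^ u * r.coeff n := by
  induction u generalizing r with
  | zero => simp
  | succ v ih =>
      rw [Function.iterate_succ_apply', theta_coeff, ih]
      ring

lemma sum_eq_eval {s : ℕ} {r : F[X]} (h : r.natDegree < s) (c : F) (u : ℕ) :
    ∑ n ∈ Finset.range s, r.coeff n * ((n : F) ^ u * c ^ n)
      = Polynomial.eval c ((theta (F := F))^[u] r) := by
  rw [Polynomial.eval_eq_sum_range' (lt_of_le_of_lt (theta_iter_natDegree_le u r) h)]
  refine Finset.sum_congr rfl fun n _ => ?_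
  rw [theta_iter_coeff]
  ring

lemma theta_dvd {c : F} {k : ℕ} {r : F[X]} (h : (X - C c) ^ (k + 1) ∣ r) :
    (X - C c) ^ k ∣ theta r := by
  obtain ⟨g, rfl⟩ := h
  refine ⟨X * (C ((k : F) + 1) * g + (X - C c) * derivative g), ?_⟩
  rw [theta, derivative_mul, derivative_pow, derivative_X_sub_C]
  simp only [Nat.add_sub_cancel, mul_one]
  push_cast
  ring

lemma eval_theta_iter_eq_zero {c : F} : ∀ (v : ℕ) (r : F[X]), (X - C c) ^ (v + 1) ∣ r →
    Polynomial.eval c ((theta (F := F))^[v] r) = 0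
  | 0, r, h => by
      obtain ⟨g, rfl⟩ := h
      simp
  | v + 1, r, h => by
      rw [Function.iterate_succ_apply]
      exact eval_theta_iter_eq_zero v (theta r) (theta_dvd h)

lemma eval_theta_iter_diag (c : F) : ∀ (t : ℕ) (g : F[X]),
    Polynomial.eval c ((theta (F := F))^[t] ((X - C c) ^ t * g))
      = ((Nat.factorial t : ℕ) : F) * c ^ t * Polynomial.eval c g
  | 0, g => by simp
  | t + 1, g => by
      rw [Function.iterate_succ_apply]
      have hstep : theta ((X - C c) ^ (t + 1) * g)
          = (X - C c) ^ t * (X * (C ((t : F) + 1) * g + (X - C c) * derivative g)) := by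
        rw [theta, derivative_mul, derivative_pow, derivative_X_sub_C]
        simp only [Nat.add_sub_cancel, mul_one]
        push_cast
        ring
      rw [hstep, eval_theta_iter_diag c t _]
      rw [Nat.factorial_succ]
      push_cast
      simp only [Polynomial.eval_mul, Polynomial.eval_add, Polynomial.eval_sub,
        Polynomial.eval_X, Polynomial.eval_C]
      ring

lemma prod_pairs {M : Type*} [CommMonoid M] {m : ℕ} (g : Fin m → Fin m → M) :
    (∏ j : Fin m, ∏ i ∈ Finset.univ.filter (· < j), g i j)
      = ∏ q ∈ Finset.univ.filter (fun q : Fin m × Fin m => q.1 < q.2), g q.1 q.2 := by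
  have h1 : ∀ j : Fin m, (∏ i ∈ Finset.univ.filter (· < j), g i j)
      = ∏ i : Fin m, if i < j then g i j else 1 := fun j => Finset.prod_filter _ _
  simp_rw [h1]
  rw [Finset.prod_comm, Finset.prod_filter, Fintype.prod_prod_type]

end ExtVdm

open Finset in
/-- Extended Vandermonde determinant formula.  The `s₁ + ⋯ + sₘ` columns are
indexed by the sigma type `Σ j : Fin m, Fin (sz j)` (the column `⟨j, t⟩`
corresponds to the function `n ↦ n ^ t * a j ^ n`), and the rows by the same
type via its canonical position enumeration `pos` (so that row number `p`
evaluates the functions at `n = p - 1`, i.e. at `0, 1, …, s - 1`). -/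
theorem extended_vandermonde_det (F : Type*) [Field F] (m : ℕ) (a : Fin m → F)
    (sz : Fin m → ℕ) (hsz : ∀ j, 0 < sz j)
    (pos : (Σ j : Fin m, Fin (sz j)) → ℕ)
    (hpos : ∀ x : Σ j : Fin m, Fin (sz j),
      pos x = (∑ j' ∈ Finset.univ.filter (fun j' => j' < x.1), sz j') + (x.2 : ℕ)) :
    Matrix.det (Matrix.of fun p k : Σ j : Fin m, Fin (sz j) =>
        ((pos p : F) ^ (k.2 : ℕ)) * a k.1 ^ (pos p)) =
      (∏ j, (Nat.superFactorial (sz j - 1) : F) * a j ^ (sz j * (sz j - 1) / 2)) *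
        ∏ q ∈ Finset.univ.filter (fun q : Fin m × Fin m => q.1 < q.2),
          (a q.2 - a q.1) ^ (sz q.1 * sz q.2) := by
  classical
  by_cases hd : ∀ i j : Fin m, a i = a j → i = j
  case neg =>
    push_neg at hd
    obtain ⟨i, j, hij, hne⟩ := hd
    have hcol : Matrix.det (Matrix.of fun p k : Σ j : Fin m, Fin (sz j) =>
        ((pos p : F) ^ (k.2 : ℕ)) * a k.1 ^ (pos p)) = 0 := by
      apply Matrix.det_zero_of_column_eq
        (i := (⟨i, ⟨0, hsz i⟩⟩ : Σ j : Fin m, Fin (sz j))) (j := ⟨j, ⟨0, hsz j⟩⟩)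
      · intro h
        exact hne (congrArg Sigma.fst h)
      · intro p
        simp [hij]
    rw [hcol]
    symm
    apply mul_eq_zero_of_right
    rcases lt_or_gt_of_ne hne with h | h
    · refine Finset.prod_eq_zero (Finset.mem_filter.mpr ⟨Finset.mem_univ (i, j), h⟩) ?_
      have hz : a j - a i = 0 := by rw [hij]; ring
      rw [hz]
      exact zero_pow (Nat.mul_ne_zero (hsz i).ne' (hsz j).ne')
    · refine Finset.prod_eq_zero (Finset.mem_filter.mpr ⟨Finset.mem_univ (j, i), h⟩) ?_
      have hz : a i - a j = 0 := by rw [hij]; ring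
      rw [hz]
      exact zero_pow (Nat.mul_ne_zero (hsz j).ne' (hsz i).ne')
  case pos =>
    set s := ∑ j, sz j with hs
    set S : Fin m → ℕ := fun j => ∑ j' ∈ Finset.univ.filter (· < j), sz j' with hSdef
    have hpos' : ∀ x : Σ j : Fin m, Fin (sz j), pos x = S x.1 + (x.2 : ℕ) := hpos
    have hSS : ∀ {i j : Fin m}, i < j → S i + sz i ≤ S j := by
      intro i j hij
      have h2 : i ∉ Finset.univ.filter (· < i) := by simp
      have h3 : S i + sz i = ∑ x ∈ insert i (Finset.univ.filter (· < i)), sz x := by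
        rw [Finset.sum_insert h2, add_comm]
      rw [h3]
      apply Finset.sum_le_sum_of_subset
      intro x hx
      simp only [Finset.mem_insert, Finset.mem_filter, Finset.mem_univ, true_and] at hx ⊢
      rcases hx with rfl | hx
      · exact hij
      · exact hx.trans hij
    have hSs : ∀ j : Fin m, S j + sz j ≤ s := by
      intro j
      have h2 : j ∉ Finset.univ.filter (· < j) := by simp
      have h3 : S j + sz j = ∑ x ∈ insert j (Finset.univ.filter (· < j)), sz x := by
        rw [Finset.sum_insert h2, add_comm]
      rw [h3, hs]
      exact Finset.sum_le_sum_of_subset (Finset.subset_univ _)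
    have hltp : ∀ x : Σ j : Fin m, Fin (sz j), pos x < s := by
      intro x
      have h1 := hpos' x
      have ht : (x.2 : ℕ) < sz x.1 := x.2.isLt
      have h2 := hSs x.1
      omega
    have hmono : ∀ x y : Σ j : Fin m, Fin (sz j), x.1 < y.1 → pos x < pos y := by
      intro x y h
      have h1 := hpos' x
      have h2 := hpos' y
      have h3 := hSS h
      have ht : (x.2 : ℕ) < sz x.1 := x.2.isLt
      omega
    have hinj : Function.Injective
        (fun x : Σ j : Fin m, Fin (sz j) => (⟨pos x, hltp x⟩ : Fin s)) := by
      intro x y hxy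
      have hp : pos x = pos y := congrArg Fin.val hxy
      obtain ⟨j, t⟩ := x; obtain ⟨i, u⟩ := y
      rcases lt_trichotomy j i with h | rfl | h
      · exact absurd hp (hmono ⟨j, t⟩ ⟨i, u⟩ h).ne
      · have h1 := hpos' ⟨j, t⟩
        have h2 := hpos' ⟨j, u⟩
        have htu : (t : ℕ) = (u : ℕ) := by
          simp only at h1 h2
          omega
        have : t = u := Fin.ext htu
        rw [this]
      · exact absurd hp.symm (hmono ⟨i, u⟩ ⟨j, t⟩ h).ne
    have hbij : Function.Bijective
        (fun x : Σ j : Fin m, Fin (sz j) => (⟨pos x, hltp x⟩ : Fin s)) := by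
      rw [Fintype.bijective_iff_injective_and_card]
      exact ⟨hinj, by simp [Fintype.card_sigma, hs]⟩
    set e : (Σ j : Fin m, Fin (sz j)) ≃ Fin s := Equiv.ofBijective _ hbij with he_def
    have he : ∀ x, ((e x : Fin s) : ℕ) = pos x := fun _ => rfl
    have hes : ∀ r : Fin s, pos (e.symm r) = (r : ℕ) := by
      intro r
      have h1 := he (e.symm r)
      rw [Equiv.apply_symm_apply] at h1
      exact h1.symm
    -- the polynomials
    set h' : Fin m → Polynomial F :=
      fun j => ∏ i ∈ Finset.univ.filter (· < j), (Polynomial.X - Polynomial.C (a i)) ^ (sz i)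
      with hh'
    set q : (Σ j : Fin m, Fin (sz j)) → Polynomial F :=
      fun x => (Polynomial.X - Polynomial.C (a x.1)) ^ (x.2 : ℕ) * h' x.1 with hq
    have hmonh : ∀ j, (h' j).Monic := fun j =>
      Polynomial.monic_prod_of_monic _ _ fun i _ => (Polynomial.monic_X_sub_C _).pow _
    have hmonq : ∀ x, (q x).Monic := fun x =>
      ((Polynomial.monic_X_sub_C _).pow _).mul (hmonh x.1)
    have hdegh : ∀ j, (h' j).natDegree = S j := by
      intro j
      simp only [hh']
      rw [Polynomial.natDegree_prod _ _
        (fun i _ => pow_ne_zero _ (Polynomial.X_sub_C_ne_zero _))]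
      simp [Polynomial.natDegree_pow, Polynomial.natDegree_X_sub_C, hSdef]
    have hdegq : ∀ x, (q x).natDegree = pos x := by
      intro x
      simp only [hq]
      rw [Polynomial.Monic.natDegree_mul ((Polynomial.monic_X_sub_C _).pow _) (hmonh x.1)]
      rw [Polynomial.natDegree_pow, Polynomial.natDegree_X_sub_C, hdegh, hpos' x, mul_one,
        add_comm]
    -- the matrices
    set V : Matrix (Σ j : Fin m, Fin (sz j)) (Σ j : Fin m, Fin (sz j)) F :=
      Matrix.of (fun p k : Σ j : Fin m, Fin (sz j) =>
        ((pos p : F) ^ (k.2 : ℕ)) * a k.1 ^ (pos p)) with hV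
    set P : Matrix (Σ j : Fin m, Fin (sz j)) (Σ j : Fin m, Fin (sz j)) F :=
      Matrix.of (fun p p' : Σ j : Fin m, Fin (sz j) => (q p).coeff (pos p')) with hP
    have hPV : ∀ p k, (P * V) p k
        = Polynomial.eval (a k.1) ((ExtVdm.theta (F := F))^[(k.2 : ℕ)] (q p)) := by
      intro p k
      rw [Matrix.mul_apply]
      calc ∑ p', P p p' * V p' k
          = ∑ r : Fin s, (q p).coeff (r : ℕ)
              * (((r : ℕ) : F) ^ (k.2 : ℕ) * a k.1 ^ (r : ℕ)) := by
            apply Fintype.sum_equiv e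
            intro p'
            rw [he]
            simp only [hP, hV, Matrix.of_apply]
        _ = ∑ n ∈ Finset.range s, (q p).coeff n * ((n : F) ^ (k.2 : ℕ) * a k.1 ^ n) :=
            Fin.sum_univ_eq_sum_range
              (fun n => (q p).coeff n * ((n : F) ^ (k.2 : ℕ) * a k.1 ^ n)) s
        _ = _ := ExtVdm.sum_eq_eval (by rw [hdegq]; exact hltp p) _ _
    have hdetP : P.det = 1 := by
      rw [← Matrix.det_reindex_self e P]
      have htri : (Matrix.reindex e e P).BlockTriangular OrderDual.toDual := by
        intro r c hrc
        have hrc' : r < c := hrc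
        rw [Matrix.reindex_apply, Matrix.submatrix_apply]
        show (q (e.symm r)).coeff (pos (e.symm c)) = 0
        apply Polynomial.coeff_eq_zero_of_natDegree_lt
        rw [hdegq, hes, hes]
        exact hrc'
      rw [Matrix.det_of_lowerTriangular _ htri]
      refine Finset.prod_eq_one fun r _ => ?_
      rw [Matrix.reindex_apply, Matrix.submatrix_apply]
      show (q (e.symm r)).coeff (pos (e.symm r)) = 1
      have h1 := (hmonq (e.symm r)).coeff_natDegree
      rwa [hdegq] at h1
    have hvanish : ∀ p k : Σ j : Fin m, Fin (sz j), pos k < pos p →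
        Polynomial.eval (a k.1) ((ExtVdm.theta (F := F))^[(k.2 : ℕ)] (q p)) = 0 := by
      rintro ⟨j, t⟩ ⟨i, u⟩ hlt'
      rcases lt_trichotomy i j with hc | rfl | hc
      · apply ExtVdm.eval_theta_iter_eq_zero
        have h1 : (Polynomial.X - Polynomial.C (a i)) ^ ((u : ℕ) + 1) ∣ h' j := by
          refine dvd_trans (pow_dvd_pow _ ?_) (Finset.dvd_prod_of_mem _ ?_)
          · exact u.isLt
          · simp [hc]
        exact h1.mul_left _
      · apply ExtVdm.eval_theta_iter_eq_zero
        have h1 := hpos' ⟨i, t⟩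
        have h2 := hpos' ⟨i, u⟩
        have hut : (u : ℕ) + 1 ≤ (t : ℕ) := by
          simp only at h1 h2
          omega
        exact dvd_mul_of_dvd_left (pow_dvd_pow _ hut) _
      · have := hmono ⟨j, t⟩ ⟨i, u⟩ hc
        omega
    have hdetPV : (P * V).det = ∏ p : Σ j : Fin m, Fin (sz j),
        Polynomial.eval (a p.1) ((ExtVdm.theta (F := F))^[(p.2 : ℕ)] (q p)) := by
      rw [← Matrix.det_reindex_self e (P * V)]
      have htri : (Matrix.reindex e e (P * V)).BlockTriangular id := by
        intro r c hrc
        rw [Matrix.reindex_apply, Matrix.submatrix_apply, hPV]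
        apply hvanish
        rw [hes, hes]
        exact hrc
      rw [Matrix.det_of_upperTriangular htri]
      simp only [Matrix.reindex_apply, Matrix.submatrix_apply, hPV]
      exact Equiv.prod_comp e.symm
        (fun p => Polynomial.eval (a p.1) ((ExtVdm.theta (F := F))^[(p.2 : ℕ)] (q p)))
    have hdetV : V.det = ∏ p : Σ j : Fin m, Fin (sz j),
        Polynomial.eval (a p.1) ((ExtVdm.theta (F := F))^[(p.2 : ℕ)] (q p)) := by
      rw [← hdetPV, Matrix.det_mul, hdetP, one_mul]
    have hdiag : ∀ p : Σ j : Fin m, Fin (sz j),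
        Polynomial.eval (a p.1) ((ExtVdm.theta (F := F))^[(p.2 : ℕ)] (q p))
          = ((Nat.factorial (p.2 : ℕ) : ℕ) : F) * a p.1 ^ (p.2 : ℕ)
            * ∏ i ∈ Finset.univ.filter (· < p.1), (a p.1 - a i) ^ sz i := by
      intro p
      simp only [hq]
      rw [ExtVdm.eval_theta_iter_diag]
      congr 1
      simp only [hh', Polynomial.eval_prod, Polynomial.eval_pow, Polynomial.eval_sub,
        Polynomial.eval_X, Polynomial.eval_C]
    -- final computation
    rw [hdetV]
    simp only [hdiag]
    rw [← Finset.univ_sigma_univ, Finset.prod_sigma]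
    have hjterm : ∀ j : Fin m,
        (∏ t : Fin (sz j), (((Nat.factorial (t : ℕ) : ℕ) : F) * a j ^ (t : ℕ)
            * ∏ i ∈ Finset.univ.filter (· < j), (a j - a i) ^ sz i))
          = ((Nat.superFactorial (sz j - 1) : F) * a j ^ (sz j * (sz j - 1) / 2))
            * ∏ i ∈ Finset.univ.filter (· < j), (a j - a i) ^ (sz i * sz j) := by
      intro j
      rw [Finset.prod_mul_distrib, Finset.prod_mul_distrib]
      have hfac : (∏ t : Fin (sz j), ((Nat.factorial (t : ℕ) : ℕ) : F))
          = (Nat.superFactorial (sz j - 1) : F) := by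
        rw [← Nat.cast_prod]
        congr 1
        rw [Fin.prod_univ_eq_prod_range (fun n => Nat.factorial n) (sz j)]
        rw [show sz j = sz j - 1 + 1 by have := hsz j; omega]
        simp only [Nat.add_sub_cancel]
        exact Nat.prod_range_succ_factorial (sz j - 1)
      have hpow : (∏ t : Fin (sz j), a j ^ (t : ℕ)) = a j ^ (sz j * (sz j - 1) / 2) := by
        rw [Finset.prod_pow_eq_pow_sum]
        congr 1
        rw [Fin.sum_univ_eq_sum_range (fun n => n) (sz j)]
        exact Finset.sum_range_id (sz j)
      have hZ : (∏ _t : Fin (sz j), ∏ i ∈ Finset.univ.filter (· < j), (a j - a i) ^ sz i)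
          = ∏ i ∈ Finset.univ.filter (· < j), (a j - a i) ^ (sz i * sz j) := by
        rw [Finset.prod_const, Finset.card_univ, Fintype.card_fin, ← Finset.prod_pow]
        exact Finset.prod_congr rfl fun i _ => by rw [← pow_mul]
      rw [hfac, hpow, hZ]
    calc (∏ j : Fin m, ∏ t : Fin (sz j),
            (((Nat.factorial (t : ℕ) : ℕ) : F) * a j ^ (t : ℕ)
              * ∏ i ∈ Finset.univ.filter (· < j), (a j - a i) ^ sz i))
        = ∏ j : Fin m, (((Nat.superFactorial (sz j - 1) : F) * a j ^ (sz j * (sz j - 1) / 2))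
            * ∏ i ∈ Finset.univ.filter (· < j), (a j - a i) ^ (sz i * sz j)) :=
          Finset.prod_congr rfl fun j _ => hjterm j
      _ = (∏ j, (Nat.superFactorial (sz j - 1) : F) * a j ^ (sz j * (sz j - 1) / 2))
            * ∏ j : Fin m, ∏ i ∈ Finset.univ.filter (· < j), (a j - a i) ^ (sz i * sz j) :=
          Finset.prod_mul_distrib
      _ = _ := by
          rw [ExtVdm.prod_pairs (fun i j => (a j - a i) ^ (sz i * sz j))]
end

section
/- If an exp-polynomial function $f(n)=\sum_{(k,a)} c_{k,a} n^k a^n$ (finite sum, with the pairs $(k,a)$, $a\in\mathbb{C}^*$, pairwise distinct) vanishes for all $n\in\mathbb{Z}$, then all coefficients $c_{k,a}$ are zero. -/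
open Polynomial

private lemma poly_zero_of_int_eval (P : ℂ[X]) (h : ∀ n : ℤ, P.eval (n : ℂ) = 0) :
    P = 0 := by
  apply Polynomial.eq_zero_of_infinite_isRoot
  apply Set.Infinite.mono (s := Set.range (fun n : ℤ => (n : ℂ)))
  · rintro x ⟨n, rfl⟩; exact h n
  · exact Set.infinite_range_of_injective Int.cast_injective

private lemma key_lemma : ∀ N : ℕ, ∀ (T : Finset ℂ) (P : ℂ → ℂ[X]),
    (∑ x ∈ T, (if P x = 0 then 0 else (P x).natDegree + 1)) = N →
    (∀ x ∈ T, x ≠ 0) →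
    (∀ n : ℤ, ∑ x ∈ T, (P x).eval (n : ℂ) * x ^ n = 0) →
    ∀ a ∈ T, P a = 0 := by
  intro N
  induction N using Nat.strong_induction_on with
  | _ N ih =>
  intro T P hm h0 h a ha
  by_cases hPa : P a = 0
  · exact hPa
  exfalso
  set d := (P a).natDegree with hd
  -- the difference operator
  set Q : ℂ → ℂ[X] := fun x => (P x).comp (X + C 1) * C x - C a * P x with hQdef
  have hQzero : ∀ x, P x = 0 → Q x = 0 := by
    intro x hx; simp [hQdef, hx]
  have hQcoeff : ∀ x, (Q x).coeff (P x).natDegree =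
      (P x).leadingCoeff * x - a * (P x).leadingCoeff := by
    intro x
    have hcomp : ((P x).comp (X + C 1)).coeff (P x).natDegree = (P x).leadingCoeff := by
      by_cases hx : P x = 0
      · simp [hx]
      have hX1 : (X + C 1 : ℂ[X]).natDegree = 1 := Polynomial.natDegree_X_add_C 1
      have h1 : ((P x).comp (X + C 1)).natDegree = (P x).natDegree := by
        rw [Polynomial.natDegree_comp, hX1, mul_one]
      have h2 : ((P x).comp (X + C 1)).leadingCoeff = (P x).leadingCoeff := by
        rw [Polynomial.leadingCoeff_comp (by rw [hX1]; exact one_ne_zero),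
          Polynomial.leadingCoeff_X_add_C, one_pow, mul_one]
      rw [← h1, Polynomial.coeff_natDegree, h2]
    simp only [hQdef, Polynomial.coeff_sub, Polynomial.coeff_mul_C, Polynomial.coeff_C_mul,
      hcomp, Polynomial.coeff_natDegree]
  have hQdeg : ∀ x, (Q x).natDegree ≤ (P x).natDegree := by
    intro x
    apply le_trans (Polynomial.natDegree_sub_le _ _)
    have hX1 : (X + C 1 : ℂ[X]).natDegree = 1 := Polynomial.natDegree_X_add_C 1
    apply max_le
    · apply le_trans (Polynomial.natDegree_mul_le)
      rw [Polynomial.natDegree_comp, hX1, mul_one, Polynomial.natDegree_C, add_zero]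
    · apply le_trans (Polynomial.natDegree_mul_le)
      rw [Polynomial.natDegree_C, zero_add]
  -- Q a has strictly smaller measure term
  have hQa : (if Q a = 0 then 0 else (Q a).natDegree + 1) < d + 1 := by
    by_cases hz : Q a = 0
    · simp [hz]
    rw [if_neg hz]
    have hc : (Q a).coeff d = 0 := by
      rw [hd, hQcoeff a]; ring
    have hne : (Q a).natDegree ≠ d := by
      intro hdeg
      exact hz (Polynomial.leadingCoeff_eq_zero.mp
        (by rw [Polynomial.leadingCoeff, hdeg]; exact hc))
    have := lt_of_le_of_ne (hQdeg a) (by rw [← hd]; exact hne)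
    omega
  -- the new measure is strictly smaller
  have hmeas : (∑ x ∈ T, (if Q x = 0 then 0 else (Q x).natDegree + 1)) < N := by
    rw [← hm]
    apply Finset.sum_lt_sum
    · intro x hx
      by_cases hqz : Q x = 0
      · simp [hqz]
      rw [if_neg hqz]
      have hpz : P x ≠ 0 := fun hpz => hqz (hQzero x hpz)
      rw [if_neg hpz]
      have := hQdeg x
      omega
    · exact ⟨a, ha, by rw [if_neg hPa, ← hd]; exact hQa⟩
  -- the functional equation for Q
  have hQfun : ∀ n : ℤ, ∑ x ∈ T, (Q x).eval (n : ℂ) * x ^ n = 0 := by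
    intro n
    have heval : ∀ x ∈ T, (Q x).eval (n : ℂ) * x ^ n =
        (P x).eval ((n : ℂ) + 1) * x ^ (n + 1) - a * ((P x).eval (n : ℂ) * x ^ n) := by
      intro x hx
      have hxz : x ≠ 0 := h0 x hx
      rw [zpow_add_one₀ hxz]
      simp [hQdef, Polynomial.eval_comp]
      ring
    rw [Finset.sum_congr rfl heval, Finset.sum_sub_distrib, ← Finset.mul_sum, h n, mul_zero,
      sub_zero]
    have := h (n + 1)
    push_cast at this ⊢
    exact this
  -- apply the induction hypothesis
  have hQall : ∀ x ∈ T, Q x = 0 :=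
    ih _ hmeas T Q rfl h0 hQfun
  -- all other polynomials vanish
  have hPother : ∀ x ∈ T, x ≠ a → P x = 0 := by
    intro x hx hxa
    by_contra hpz
    have hc := hQcoeff x
    rw [hQall x hx] at hc
    simp only [Polynomial.coeff_zero] at hc
    have hc2 : (P x).leadingCoeff * (x - a) = 0 := by linear_combination -hc
    rcases mul_eq_zero.mp hc2 with h1 | h2
    · exact hpz (Polynomial.leadingCoeff_eq_zero.mp h1)
    · exact hxa (by linear_combination h2)
  -- reduce h to a single term, conclude P a = 0
  have hsingle : ∀ n : ℤ, (P a).eval (n : ℂ) * a ^ n = 0 := by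
    intro n
    have := h n
    rwa [Finset.sum_eq_single a (fun x hx hxa => by rw [hPother x hx hxa]; simp)
      (fun hna => absurd ha hna)] at this
  apply hPa
  apply poly_zero_of_int_eval
  intro n
  have := hsingle n
  have haz : (a : ℂ) ^ n ≠ 0 := zpow_ne_zero n (h0 a ha)
  exact (mul_eq_zero.mp this).resolve_right haz

/-- Uniqueness of the exp-polynomial expansion: if a finite sum
`∑ c_{k,a} nᵏ aⁿ` over pairwise distinct pairs `(k, a)` with `a ∈ ℂ*`
vanishes for all `n ∈ ℤ`, then all coefficients `c_{k,a}` vanish. -/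
theorem expPoly_expansion_unique (S : Finset (ℕ × ℂ)) (c : ℕ × ℂ → ℂ)
    (h0 : ∀ p ∈ S, p.2 ≠ 0)
    (h : ∀ n : ℤ, ∑ p ∈ S, c p * ((n : ℂ) ^ p.1 * p.2 ^ n) = 0) :
    ∀ p ∈ S, c p = 0 := by
  classical
  set T : Finset ℂ := S.image Prod.snd with hT
  set P : ℂ → ℂ[X] := fun a => ∑ p ∈ S.filter (fun q => q.2 = a), C (c p) * X ^ p.1 with hP
  have hsum : ∀ n : ℤ, ∑ a ∈ T, (P a).eval (n : ℂ) * a ^ n = 0 := by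
    intro n
    have hfib := Finset.sum_fiberwise_of_maps_to (g := Prod.snd) (t := T)
      (fun p hp => Finset.mem_image_of_mem _ hp)
      (fun p => c p * ((n : ℂ) ^ p.1 * p.2 ^ n))
    rw [← h n, ← hfib]
    apply Finset.sum_congr rfl
    intro a _
    rw [hP]
    simp only [Polynomial.eval_finset_sum, Polynomial.eval_mul, Polynomial.eval_C,
      Polynomial.eval_pow, Polynomial.eval_X, Finset.sum_mul]
    apply Finset.sum_congr rfl
    intro p hp
    have := (Finset.mem_filter.mp hp).2
    rw [this]
    ring
  have hPall : ∀ a ∈ T, P a = 0 :=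
    key_lemma _ T P rfl (fun x hx => by
      obtain ⟨p, hp, rfl⟩ := Finset.mem_image.mp hx
      exact h0 p hp) hsum
  intro p hp
  have haT : p.2 ∈ T := Finset.mem_image_of_mem _ hp
  have hz := hPall p.2 haT
  have hcoeff : (P p.2).coeff p.1 = c p := by
    rw [hP]
    simp only [Polynomial.finset_sum_coeff, Polynomial.coeff_C_mul, Polynomial.coeff_X_pow]
    rw [Finset.sum_eq_single p]
    · simp
    · intro q hq hqp
      have hq2 : q.2 = p.2 := (Finset.mem_filter.mp hq).2
      have : q.1 ≠ p.1 := fun h1 => hqp (Prod.ext h1 hq2)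
      simp [if_neg (Ne.symm this)]
    · intro hnp
      have : p ∈ S.filter (fun q => q.2 = p.2) := Finset.mem_filter.mpr ⟨hp, rfl⟩
      exact absurd this hnp
  rw [hz] at hcoeff
  simpa using hcoeff.symm
end
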